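/- Let M_H, M_V, N ≥ 1 be natural numbers and set M = M_H·M_V. For i ∈ {u, j}, let β_i ∈ ℂ, σ_i, ς_i, c_i ∈ ℝ, and λ > 0. Let a_i ∈ ℂ^M be the vector indexed by pairs (m₁, m₂) with 0 ≤ m₁ < M_H and 0 ≤ m₂ < M_V whose (m₁, m₂)-th entry is exp(i·(2π/λ)·(m₁·σ_i + m₂·ς_i + c_i)), and let b_i ∈ ℂ^N be any vector with |[b_i]_n| = 1 for all n. Define the rank-one LoS channels H_i = β_i · a_i·b_iᵀ ∈ ℂ^{M×N}. If sin(π(σ_j − σ_u)/λ) ≠ 0 and sin(π(ς_j − ς_u)/λ) ≠ 0, then the inter-user interference power satisfies ‖H_uᴴ H_j‖_F² = N² · |β_u|² · |β_j|² · (sin²(π·M_H·(σ_j − σ_u)/λ) / sin²(π·(σ_j − σ_u)/λ)) · (sin²(π·M_V·(ς_j − ς_u)/λ) / sin²(π·(ς_j − ς_u)/λ)). (This is the closed-form interference expression underlying Corollary 1.) -/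

import Mathlib

/-!
Both channels are rank one, `H_i = a_i (β_i b_i)ᵀ`, so `H_uᴴ H_j = (β_u b_u)^* (a_uᴴ a_j) (β_j b_j)ᵀ`
and its Frobenius norm factors as `N |β_u|² · N |β_j|² · |a_uᴴ a_j|²`. Since the phases of the
UPA steering vectors are affine in `(m₁, m₂)`, the correlation `a_uᴴ a_j` is a unimodular factor
times a product of two geometric sums in `e^{iκ(σ_j-σ_u)}` and `e^{iκ(ς_j-ς_u)}`, whose moduli are
Dirichlet-kernel ratios `|sin(Mx/2)| / |sin(x/2)|`.
-/

open Matrix Finset Complex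

theorem norm_geom_sum_exp_I_mul (M : ℕ) {x : ℝ} (hx : Real.sin (x / 2) ≠ 0) :
    ‖∑ k ∈ range M, cexp (I * x) ^ k‖ = |Real.sin (M * x / 2)| / |Real.sin (x / 2)| := by
  have hne : cexp (I * x) ≠ 1 := by
    rw [← sub_ne_zero, ← norm_ne_zero_iff, norm_exp_I_mul_ofReal_sub_one]
    simpa using hx
  rw [geom_sum_eq hne, norm_div, ← Complex.exp_nat_mul,
    show (M : ℂ) * (I * x) = I * ((M * x : ℝ) : ℂ) by push_cast; ring,
    norm_exp_I_mul_ofReal_sub_one, norm_exp_I_mul_ofReal_sub_one, norm_mul, norm_mul,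
    mul_div_mul_left _ _ (by norm_num)]
  simp only [Real.norm_eq_abs]

theorem sum_sum_norm_sq_vecMulVec {m n 𝕜 : Type*} [Fintype m] [Fintype n]
    [NormedDivisionRing 𝕜] (u : m → 𝕜) (v : n → 𝕜) :
    ∑ i, ∑ j, ‖vecMulVec u v i j‖ ^ 2 = (∑ i, ‖u i‖ ^ 2) * ∑ j, ‖v j‖ ^ 2 := by
  simp only [vecMulVec_apply, norm_mul, mul_pow, Finset.sum_mul_sum]

theorem star_exp_I_mul_mul_exp_I_mul (r r' : ℝ) :
    star (cexp (I * r)) * cexp (I * r') = cexp (I * (r' - r : ℝ)) := by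
  rw [star_def, ← exp_conj, map_mul, conj_I, conj_ofReal, ← Complex.exp_add]
  push_cast; ring_nf

/-- The UPA steering vector `a_i` of the paper, with `κ = 2π/λ`. -/
noncomputable def upaSteering (p q : ℕ) (κ σ ς c : ℝ) : Fin p × Fin q → ℂ :=
  fun m => cexp (I * ((κ * ((m.1 : ℝ) * σ + (m.2 : ℝ) * ς + c) : ℝ) : ℂ))

theorem star_upaSteering_dotProduct (p q : ℕ) (κ σ ς c σ' ς' c' : ℝ) :
    star (upaSteering p q κ σ ς c) ⬝ᵥ upaSteering p q κ σ' ς' c' =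
      cexp (I * (κ * (c' - c) : ℝ)) * (∑ k ∈ range p, cexp (I * (κ * (σ' - σ) : ℝ)) ^ k) *
        ∑ k ∈ range q, cexp (I * (κ * (ς' - ς) : ℝ)) ^ k := by
  have hterm : ∀ m : Fin p × Fin q,
      star (upaSteering p q κ σ ς c m) * upaSteering p q κ σ' ς' c' m =
      cexp (I * (κ * (c' - c) : ℝ)) * (cexp (I * (κ * (σ' - σ) : ℝ)) ^ (m.1 : ℕ) *
        cexp (I * (κ * (ς' - ς) : ℝ)) ^ (m.2 : ℕ)) := by
    intro m
    rw [upaSteering, upaSteering, star_exp_I_mul_mul_exp_I_mul, ← Complex.exp_nat_mul,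
      ← Complex.exp_nat_mul, ← Complex.exp_add, ← Complex.exp_add]
    push_cast; ring_nf
  simp only [dotProduct, Pi.star_apply, hterm, ← Finset.mul_sum, Fintype.sum_prod_type]
  rw [← Fin.sum_univ_eq_sum_range, ← Fin.sum_univ_eq_sum_range, mul_assoc, Finset.sum_mul]

theorem norm_star_upaSteering_dotProduct (p q : ℕ) {κ σ ς c σ' ς' c' : ℝ}
    (hσ : Real.sin (κ * (σ' - σ) / 2) ≠ 0) (hς : Real.sin (κ * (ς' - ς) / 2) ≠ 0) :
    ‖star (upaSteering p q κ σ ς c) ⬝ᵥ upaSteering p q κ σ' ς' c'‖ =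
      |Real.sin (p * (κ * (σ' - σ)) / 2)| / |Real.sin (κ * (σ' - σ) / 2)| *
        (|Real.sin (q * (κ * (ς' - ς)) / 2)| / |Real.sin (κ * (ς' - ς) / 2)|) := by
  rw [star_upaSteering_dotProduct, norm_mul, norm_mul, norm_exp_I_mul_ofReal, one_mul,
    norm_geom_sum_exp_I_mul p hσ, norm_geom_sum_exp_I_mul q hς]

theorem upa_interference_closed_form_general
    (M_H M_V N : ℕ)
    (βu βj : ℂ) (σu σj ςu ςj cu cj lam : ℝ)
    (bu bj : Fin N → ℂ)
    (hbu : ∀ n, ‖bu n‖ = 1) (hbj : ∀ n, ‖bj n‖ = 1)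
    (Hu Hj : Matrix (Fin M_H × Fin M_V) (Fin N) ℂ)
    (hHu : ∀ m n, Hu m n = βu *
      Complex.exp (Complex.I *
        (((2 * Real.pi / lam) * ((m.1 : ℝ) * σu + (m.2 : ℝ) * ςu + cu) : ℝ) : ℂ)) * bu n)
    (hHj : ∀ m n, Hj m n = βj *
      Complex.exp (Complex.I *
        (((2 * Real.pi / lam) * ((m.1 : ℝ) * σj + (m.2 : ℝ) * ςj + cj) : ℝ) : ℂ)) * bj n)
    (hσ : Real.sin (Real.pi * (σj - σu) / lam) ≠ 0)
    (hς : Real.sin (Real.pi * (ςj - ςu) / lam) ≠ 0) :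
    ∑ n₁, ∑ n₂, ‖(Huᴴ * Hj) n₁ n₂‖ ^ 2 =
      (N : ℝ) ^ 2 * ‖βu‖ ^ 2 * ‖βj‖ ^ 2 *
        (Real.sin (Real.pi * M_H * (σj - σu) / lam) ^ 2 /
          Real.sin (Real.pi * (σj - σu) / lam) ^ 2) *
        (Real.sin (Real.pi * M_V * (ςj - ςu) / lam) ^ 2 /
          Real.sin (Real.pi * (ςj - ςu) / lam) ^ 2) := by
  set κ := 2 * Real.pi / lam
  have hu : Hu = vecMulVec (upaSteering M_H M_V κ σu ςu cu) (βu • bu) := by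
    ext m n; rw [hHu, vecMulVec_apply, Pi.smul_apply, smul_eq_mul, upaSteering]; ring
  have hj : Hj = vecMulVec (upaSteering M_H M_V κ σj ςj cj) (βj • bj) := by
    ext m n; rw [hHj, vecMulVec_apply, Pi.smul_apply, smul_eq_mul, upaSteering]; ring
  have half (t : ℝ) : κ * t / 2 = Real.pi * t / lam := by ring
  have half_mul (M : ℕ) (t : ℝ) : M * (κ * t) / 2 = Real.pi * M * t / lam := by ring
  have hcorr := norm_star_upaSteering_dotProduct M_H M_V (κ := κ) (σ := σu) (ς := ςu) (c := cu)
    (σ' := σj) (ς' := ςj) (c' := cj) (by rwa [half]) (by rwa [half])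
  rw [half, half, half_mul, half_mul] at hcorr
  rw [hu, hj, conjTranspose_vecMulVec, vecMulVec_mul_vecMulVec, sum_sum_norm_sq_vecMulVec]
  simp only [Pi.star_apply, Pi.smul_apply, smul_eq_mul, norm_star, norm_mul, hbu, hbj, hcorr,
    mul_pow, div_pow, sq_abs, mul_one, Finset.sum_const, Finset.card_univ, Fintype.card_fin,
    nsmul_eq_mul]
  ring

/-- Closed-form inter-user interference (Corollary 1): for rank-one LoS channels generated by
UPA steering vectors with per-index phase increments `σ_i, ς_i`, the interference power is
`‖H_uᴴ H_j‖_F² = N²·|β_u|²·|β_j|²·(sin²(πM_H(σ_j−σ_u)/λ)/sin²(π(σ_j−σ_u)/λ))·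
(sin²(πM_V(ς_j−ς_u)/λ)/sin²(π(ς_j−ς_u)/λ))`. -/
theorem upa_interference_closed_form
    (M_H M_V N : ℕ) (hMH : 1 ≤ M_H) (hMV : 1 ≤ M_V) (hN : 1 ≤ N)
    (βu βj : ℂ) (σu σj ςu ςj cu cj lam : ℝ) (hlam : 0 < lam)
    (bu bj : Fin N → ℂ)
    (hbu : ∀ n, ‖bu n‖ = 1) (hbj : ∀ n, ‖bj n‖ = 1)
    (Hu Hj : Matrix (Fin M_H × Fin M_V) (Fin N) ℂ)
    (hHu : ∀ m n, Hu m n = βu *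
      Complex.exp (Complex.I *
        (((2 * Real.pi / lam) * ((m.1 : ℝ) * σu + (m.2 : ℝ) * ςu + cu) : ℝ) : ℂ)) * bu n)
    (hHj : ∀ m n, Hj m n = βj *
      Complex.exp (Complex.I *
        (((2 * Real.pi / lam) * ((m.1 : ℝ) * σj + (m.2 : ℝ) * ςj + cj) : ℝ) : ℂ)) * bj n)
    (hσ : Real.sin (Real.pi * (σj - σu) / lam) ≠ 0)
    (hς : Real.sin (Real.pi * (ςj - ςu) / lam) ≠ 0) :
    ∑ n₁, ∑ n₂, ‖(Huᴴ * Hj) n₁ n₂‖ ^ 2 =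
      (N : ℝ) ^ 2 * ‖βu‖ ^ 2 * ‖βj‖ ^ 2 *
        (Real.sin (Real.pi * M_H * (σj - σu) / lam) ^ 2 /
          Real.sin (Real.pi * (σj - σu) / lam) ^ 2) *
        (Real.sin (Real.pi * M_V * (ςj - ςu) / lam) ^ 2 /
          Real.sin (Real.pi * (ςj - ςu) / lam) ^ 2) :=
  upa_interference_closed_form_general M_H M_V N βu βj σu σj ςu ςj cu cj lam bu bj hbu hbj Hu Hj hHu
    hHj hσ hς
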